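/- arXiv:physics/0703214 — 4 statements merged into one kernel-verified Lean document; each statement's English description precedes it below -/
import Mathlib

section
/- If γ^0, γ^1, γ^2, γ^3 and γ̃^0, γ̃^1, γ̃^2, γ̃^3 are two sets of Dirac matrices (i.e., both families satisfy the anticommutation relations and the hermiticity condition), then there exists a unitary 4×4 complex matrix U such that γ̃^μ = U γ^μ U† for all μ = 0,1,2,3. -/
open Matrix

/-- The Minkowski metric `g = diag(+1, -1, -1, -1)` (as complex numbers). -/
noncomputable def minkowski (μ ν : Fin 4) : ℂ :=
  if μ = ν then (if μ = 0 then 1 else -1) else 0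

/-- A family `γ^0, γ^1, γ^2, γ^3` of 4×4 complex matrices is a set of Dirac matrices if it
satisfies the anticommutation relations `γ^μ γ^ν + γ^ν γ^μ = 2 g^{μν} I` and the hermiticity
condition `(γ^μ)† = γ^0 γ^μ γ^0`. -/
def IsDiracFamily (γ : Fin 4 → Matrix (Fin 4) (Fin 4) ℂ) : Prop :=
  (∀ μ ν, γ μ * γ ν + γ ν * γ μ = (2 * minkowski μ ν) • (1 : Matrix (Fin 4) (Fin 4) ℂ)) ∧
  (∀ μ, (γ μ)ᴴ = γ 0 * γ μ * γ 0)

/-- The gamma matrices with lowered index: `γ_μ = g_{μν} γ^ν` (sum over `ν`). -/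
noncomputable def lowerGamma (γ : Fin 4 → Matrix (Fin 4) (Fin 4) ℂ) (μ : Fin 4) :
    Matrix (Fin 4) (Fin 4) ℂ :=
  ∑ ν, minkowski μ ν • γ ν

/-- The sigma matrices `σ^{μν} = (i/2)(γ^μ γ^ν - γ^ν γ^μ)`. -/
noncomputable def sigmaUp (γ : Fin 4 → Matrix (Fin 4) (Fin 4) ℂ) (μ ν : Fin 4) :
    Matrix (Fin 4) (Fin 4) ℂ :=
  (Complex.I / 2) • (γ μ * γ ν - γ ν * γ μ)

/-- The sigma matrices with both indices lowered: `σ_{μν} = g_{μα} g_{νβ} σ^{αβ}`. -/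
noncomputable def sigmaLow (γ : Fin 4 → Matrix (Fin 4) (Fin 4) ℂ) (μ ν : Fin 4) :
    Matrix (Fin 4) (Fin 4) ℂ :=
  ∑ α, ∑ β, (minkowski μ α * minkowski ν β) • sigmaUp γ α β

/-- `γ_5 = i γ^0 γ^1 γ^2 γ^3`. -/
noncomputable def gammaFive (γ : Fin 4 → Matrix (Fin 4) (Fin 4) ℂ) :
    Matrix (Fin 4) (Fin 4) ℂ :=
  Complex.I • (γ 0 * γ 1 * γ 2 * γ 3)


namespace Pauli
abbrev M4 := Matrix (Fin 4) (Fin 4) ℂ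
noncomputable def G (γ : Fin 4 → M4) (ε : Fin 4 → Bool) : M4 :=
  (cond (ε 0) (γ 0) 1) * ((cond (ε 1) (γ 1) 1) * ((cond (ε 2) (γ 2) 1) * (cond (ε 3) (γ 3) 1)))
def bx (ε δ : Fin 4 → Bool) : Fin 4 → Bool := fun i => xor (ε i) (δ i)
def phZ (ε δ : Fin 4 → Bool) : ℤ :=
  (if δ 0 && ε 1 then -1 else 1) * (if δ 0 && ε 2 then -1 else 1) *
  (if δ 0 && ε 3 then -1 else 1) * (if δ 1 && ε 2 then -1 else 1) *
  (if δ 1 && ε 3 then -1 else 1) * (if δ 2 && ε 3 then -1 else 1) *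
  (if ε 1 && δ 1 then -1 else 1) * (if ε 2 && δ 2 then -1 else 1) *
  (if ε 3 && δ 3 then -1 else 1)
variable {γ : Fin 4 → M4}
lemma sq (hγ : IsDiracFamily γ) (μ : Fin 4) : γ μ * γ μ = minkowski μ μ • 1 := by
  have h := hγ.1 μ μ
  have h2 : (2:ℂ) • (γ μ * γ μ) = (2:ℂ) • (minkowski μ μ • (1:M4)) := by
    rw [two_smul, h, mul_smul]
  exact smul_right_injective M4 two_ne_zero h2
lemma sq0 (hγ : IsDiracFamily γ) : γ 0 * γ 0 = 1 := by simpa [minkowski] using sq hγ 0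
lemma sq1 (hγ : IsDiracFamily γ) : γ 1 * γ 1 = -1 := by simpa [minkowski] using sq hγ 1
lemma sq2 (hγ : IsDiracFamily γ) : γ 2 * γ 2 = -1 := by simpa [minkowski] using sq hγ 2
lemma sq3 (hγ : IsDiracFamily γ) : γ 3 * γ 3 = -1 := by simpa [minkowski] using sq hγ 3
lemma swap (hγ : IsDiracFamily γ) {μ ν : Fin 4} (h : μ ≠ ν) :
    γ μ * γ ν = -(γ ν * γ μ) := by
  have h1 := hγ.1 μ ν
  rw [minkowski, if_neg h] at h1
  simp only [mul_zero, zero_smul] at h1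
  exact eq_neg_of_add_eq_zero_left h1

set_option maxHeartbeats 4000000 in
lemma Gmul (hγ : IsDiracFamily γ) (ε δ : Fin 4 → Bool) :
    G γ ε * G γ δ = (phZ ε δ : ℂ) • G γ (bx ε δ) := by
  have g10 : γ 1 * γ 0 = -(γ 0 * γ 1) := swap hγ (by decide)
  have g20 : γ 2 * γ 0 = -(γ 0 * γ 2) := swap hγ (by decide)
  have g30 : γ 3 * γ 0 = -(γ 0 * γ 3) := swap hγ (by decide)
  have g21 : γ 2 * γ 1 = -(γ 1 * γ 2) := swap hγ (by decide)
  have g31 : γ 3 * γ 1 = -(γ 1 * γ 3) := swap hγ (by decide)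
  have g32 : γ 3 * γ 2 = -(γ 2 * γ 3) := swap hγ (by decide)
  have g10' : ∀ X, γ 1 * (γ 0 * X) = -(γ 0 * (γ 1 * X)) := fun X => by
    rw [← mul_assoc, g10, neg_mul, mul_assoc]
  have g20' : ∀ X, γ 2 * (γ 0 * X) = -(γ 0 * (γ 2 * X)) := fun X => by
    rw [← mul_assoc, g20, neg_mul, mul_assoc]
  have g30' : ∀ X, γ 3 * (γ 0 * X) = -(γ 0 * (γ 3 * X)) := fun X => by
    rw [← mul_assoc, g30, neg_mul, mul_assoc]
  have g21' : ∀ X, γ 2 * (γ 1 * X) = -(γ 1 * (γ 2 * X)) := fun X => by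
    rw [← mul_assoc, g21, neg_mul, mul_assoc]
  have g31' : ∀ X, γ 3 * (γ 1 * X) = -(γ 1 * (γ 3 * X)) := fun X => by
    rw [← mul_assoc, g31, neg_mul, mul_assoc]
  have g32' : ∀ X, γ 3 * (γ 2 * X) = -(γ 2 * (γ 3 * X)) := fun X => by
    rw [← mul_assoc, g32, neg_mul, mul_assoc]
  have s0 := sq0 hγ; have s1 := sq1 hγ; have s2 := sq2 hγ; have s3 := sq3 hγ
  have s0' : ∀ X, γ 0 * (γ 0 * X) = X := fun X => by rw [← mul_assoc, s0, one_mul]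
  have s1' : ∀ X, γ 1 * (γ 1 * X) = -X := fun X => by rw [← mul_assoc, s1, neg_one_mul]
  have s2' : ∀ X, γ 2 * (γ 2 * X) = -X := fun X => by rw [← mul_assoc, s2, neg_one_mul]
  have s3' : ∀ X, γ 3 * (γ 3 * X) = -X := fun X => by rw [← mul_assoc, s3, neg_one_mul]
  simp only [G, bx, phZ]
  cases h0 : ε 0 <;> cases h1 : ε 1 <;> cases h2 : ε 2 <;> cases h3 : ε 3 <;>
  cases k0 : δ 0 <;> cases k1 : δ 1 <;> cases k2 : δ 2 <;> cases k3 : δ 3 <;>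
    simp [mul_assoc, mul_neg, neg_mul, neg_neg, g10, g20, g30, g21, g31, g32,
      g10', g20', g30', g21', g31', g32', s0, s1, s2, s3, s0', s1', s2', s3',
      neg_smul, one_smul, smul_neg]

-- basic decidable facts about phZ and bx
lemma phZ_pm : ∀ ε δ : Fin 4 → Bool, phZ ε δ = 1 ∨ phZ ε δ = -1 := by decide
lemma phZ_mul_self (ε δ : Fin 4 → Bool) : (phZ ε δ : ℂ) * (phZ ε δ : ℂ) = 1 := by
  rcases phZ_pm ε δ with h | h <;> rw [h] <;> norm_num
lemma phZ_ne_zero (ε δ : Fin 4 → Bool) : (phZ ε δ : ℂ) ≠ 0 := by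
  rcases phZ_pm ε δ with h | h <;> rw [h] <;> norm_num
lemma bx_self (ε : Fin 4 → Bool) : bx ε ε = fun _ => false := by
  funext i; simp [bx]
lemma bx_comm (ε δ : Fin 4 → Bool) : bx ε δ = bx δ ε := by
  funext i; simp [bx, Bool.xor_comm]
lemma bx_eq_zero_iff (ε δ : Fin 4 → Bool) : bx ε δ = (fun _ => false) ↔ ε = δ := by
  constructor
  · intro h; funext i
    have := congrFun h i
    simp only [bx] at this
    cases hε : ε i <;> cases hδ : δ i <;> simp_all
  · rintro rfl; exact bx_self ε
lemma G_zero : G γ (fun _ => false) = 1 := by simp [G]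
lemma exists_anticomm : ∀ ε : Fin 4 → Bool, ε ≠ (fun _ => false) →
    ∃ δ, phZ δ ε = -phZ ε δ := by decide

lemma G_mul_G_self (hγ : IsDiracFamily γ) (ε : Fin 4 → Bool) :
    G γ ε * G γ ε = (phZ ε ε : ℂ) • 1 := by
  rw [Gmul hγ, bx_self, G_zero]

lemma G_inv (hγ : IsDiracFamily γ) (ε : Fin 4 → Bool) :
    G γ ε * ((phZ ε ε : ℂ) • G γ ε) = 1 := by
  rw [Matrix.mul_smul, G_mul_G_self hγ, smul_smul, phZ_mul_self, one_smul]

lemma G_inv' (hγ : IsDiracFamily γ) (ε : Fin 4 → Bool) :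
    ((phZ ε ε : ℂ) • G γ ε) * G γ ε = 1 := by
  rw [Matrix.smul_mul, G_mul_G_self hγ, smul_smul, phZ_mul_self, one_smul]

lemma trace_G (hγ : IsDiracFamily γ) {ε : Fin 4 → Bool} (hε : ε ≠ fun _ => false) :
    trace (G γ ε) = 0 := by
  obtain ⟨δ, hδ⟩ := exists_anticomm ε hε
  have h1 : G γ δ * G γ ε = -(G γ ε * G γ δ) := by
    rw [Gmul hγ, Gmul hγ, bx_comm δ ε, hδ]
    push_cast
    rw [neg_smul]
  have h2 : trace (G γ δ * G γ ε * ((phZ δ δ : ℂ) • G γ δ)) = trace (G γ ε) := by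
    rw [Matrix.trace_mul_cycle, G_inv' hγ, one_mul]
  rw [h1, neg_mul, trace_neg, mul_assoc, G_inv hγ, mul_one] at h2
  have h3 : (2:ℂ) * trace (G γ ε) = 0 := by linear_combination -h2
  simpa using h3

lemma linind (hγ : IsDiracFamily γ) : LinearIndependent ℂ (G γ) := by
  rw [Fintype.linearIndependent_iff]
  intro c h B
  have h1 := congrArg (fun M : M4 => trace (M * G γ B)) h
  simp only [Matrix.zero_mul, trace_zero, Finset.sum_mul, trace_sum,
    Matrix.smul_mul, trace_smul] at h1
  rw [Finset.sum_eq_single B] at h1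
  · rw [G_mul_G_self hγ, trace_smul, smul_eq_mul, smul_eq_mul, trace_one] at h1
    have h4 : (4 : ℂ) ≠ 0 := by norm_num
    have := mul_eq_zero.mp h1
    rcases this with h' | h'
    · exact h'
    · exact absurd h' (by
        intro h''
        rcases mul_eq_zero.mp h'' with h3 | h3
        · exact phZ_ne_zero B B h3
        · exact h4 h3)
  · intro A _ hAB
    rw [Gmul hγ, trace_smul, trace_G hγ (by
      rw [Ne, bx_eq_zero_iff]; exact hAB)]
    simp
  · intro hB; exact absurd (Finset.mem_univ B) hB

lemma commute_scalar (hγ : IsDiracFamily γ) {M : M4}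
    (h : ∀ μ, M * γ μ = γ μ * M) : ∃ c : ℂ, M = c • 1 := by
  have hG : ∀ ε, Commute M (G γ ε) := by
    intro ε
    have hc : ∀ i, Commute M (cond (ε i) (γ i) 1) := by
      intro i; cases ε i
      · exact Commute.one_right M
      · exact h i
    exact ((hc 0).mul_right ((hc 1).mul_right ((hc 2).mul_right (hc 3))))
  have hcard : Fintype.card (Fin 4 → Bool) = Module.finrank ℂ M4 := by
    simp [Module.finrank_matrix]
  let b : Module.Basis (Fin 4 → Bool) ℂ M4 :=
    basisOfLinearIndependentOfCardEqFinrank (linind hγ) hcard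
  have hb : ⇑b = G γ := coe_basisOfLinearIndependentOfCardEqFinrank _ _
  have hall : ∀ N : M4, Commute M N := by
    intro N
    have hN : N ∈ Submodule.span ℂ (Set.range (G γ)) := by
      rw [← hb, b.span_eq]; trivial
    induction hN using Submodule.span_induction with
    | mem x hx => obtain ⟨ε, rfl⟩ := hx; exact hG ε
    | zero => exact Commute.zero_right M
    | add x y _ _ hx hy => exact hx.add_right hy
    | smul a x _ hx => exact hx.smul_right a
  obtain ⟨r, hr⟩ := mem_range_scalar_of_commute_single
    (fun i j _ => (hall _).symm)
  refine ⟨r, ?_⟩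
  rw [← hr]
  ext i j
  simp [Matrix.scalar_apply, Matrix.one_apply, Matrix.diagonal_apply]

def e (μ : Fin 4) : Fin 4 → Bool := fun i => decide (i = μ)

lemma G_single (μ : Fin 4) : G γ (e μ) = γ μ := by
  fin_cases μ <;> simp [G, e] <;> rfl

lemma bx_invol (ε : Fin 4 → Bool) : Function.Involutive (bx ε) := by
  intro B; funext i; simp [bx]

lemma key_sign : ∀ ε B : Fin 4 → Bool,
    phZ (bx ε B) (bx ε B) * phZ ε (bx ε B) = phZ B B * phZ B ε := by decide

noncomputable def Smap (γ γ' : Fin 4 → M4) (F : M4) : M4 :=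
  ∑ A : Fin 4 → Bool, (phZ A A : ℂ) • (G γ' A * F * G γ A)

lemma term_eq {γ' : Fin 4 → M4} (hγ : IsDiracFamily γ) (hγ' : IsDiracFamily γ')
    (F : M4) (μ : Fin 4) (B : Fin 4 → Bool) :
    G γ' (e μ) * ((phZ B B : ℂ) • (G γ' B * F * G γ B)) =
      ((phZ (bx (e μ) B) (bx (e μ) B) : ℂ) •
        (G γ' (bx (e μ) B) * F * G γ (bx (e μ) B))) * G γ (e μ) := by
  have hBA : bx (e μ) (bx (e μ) B) = B := bx_invol _ _
  have l1 : G γ' (e μ) * G γ' B = (phZ (e μ) B : ℂ) • G γ' (bx (e μ) B) := Gmul hγ' _ _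
  have l2 : G γ (bx (e μ) B) * G γ (e μ) = (phZ (bx (e μ) B) (e μ) : ℂ) • G γ B := by
    rw [Gmul hγ, bx_comm (bx (e μ) B) (e μ), hBA]
  rw [Matrix.mul_smul, Matrix.smul_mul]
  rw [← mul_assoc (G γ' (e μ)), ← mul_assoc (G γ' (e μ)), l1]
  rw [mul_assoc (G γ' (bx (e μ) B) * F), l2]
  simp only [Matrix.smul_mul, Matrix.mul_smul, smul_smul]
  congr 1
  have hk := key_sign (e μ) (bx (e μ) B)
  rw [hBA] at hk
  exact_mod_cast congrArg (fun z : ℤ => (z : ℂ)) hk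

lemma intertwine {γ' : Fin 4 → M4} (hγ : IsDiracFamily γ) (hγ' : IsDiracFamily γ')
    (F : M4) (μ : Fin 4) : γ' μ * Smap γ γ' F = Smap γ γ' F * γ μ := by
  unfold Smap
  rw [Finset.mul_sum, Finset.sum_mul]
  apply Fintype.sum_equiv ((bx_invol (e μ)).toPerm)
  intro B
  have h1 : γ' μ = G γ' (e μ) := (G_single μ).symm
  have h2 : γ μ = G γ (e μ) := (G_single μ).symm
  rw [h1, h2]
  exact term_eq hγ hγ' F μ B

lemma smap_entry {γ' : Fin 4 → M4} (A : Fin 4 → Bool) (i j k l : Fin 4) :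
    (G γ' A * Matrix.single i j (1:ℂ) * G γ A) k l = G γ' A k i * G γ A j l := by
  rw [Matrix.mul_apply]
  have hq : ∀ q, (G γ' A * Matrix.single i j (1:ℂ)) k q
      = if j = q then G γ' A k i else 0 := by
    intro q
    rw [Matrix.mul_apply]
    simp [Matrix.single, Matrix.of_apply, ite_and]
  simp only [hq, ite_mul, zero_mul]
  rw [Finset.sum_ite_eq (Finset.univ) j (fun q => G γ' A k i * G γ A q l)]
  simp

lemma exists_ne_zero {γ' : Fin 4 → M4} (hγ : IsDiracFamily γ) (hγ' : IsDiracFamily γ') :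
    ∃ F : M4, Smap γ γ' F ≠ 0 := by
  by_contra hcon
  push_neg at hcon
  have hki : ∀ (A : Fin 4 → Bool) (k i : Fin 4), G γ' A k i = 0 := by
    intro A k i
    have hli := Fintype.linearIndependent_iff.mp (linind hγ)
      (fun B => (phZ B B : ℂ) * G γ' B k i) ?_ A
    · rcases mul_eq_zero.mp hli with h | h
      · exact absurd h (phZ_ne_zero A A)
      · exact h
    · ext j l
      have h0 := congrFun (congrFun (hcon (Matrix.single i j 1)) k) l
      simp only [Smap, Matrix.sum_apply, Matrix.zero_apply] at h0 ⊢
      rw [← h0]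
      apply Finset.sum_congr rfl
      intro B _
      rw [Matrix.smul_apply, Matrix.smul_apply, smap_entry]
      simp [smul_eq_mul]
      ring
  have h1 : G γ' (fun _ => false) 0 0 = 0 := hki _ 0 0
  rw [G_zero] at h1
  simp [Matrix.one_apply] at h1

theorem main {γ γ' : Fin 4 → M4} (hγ : IsDiracFamily γ) (hγ' : IsDiracFamily γ') :
    ∃ U : Matrix (Fin 4) (Fin 4) ℂ, U ∈ Matrix.unitaryGroup (Fin 4) ℂ ∧
      ∀ μ, γ' μ = U * γ μ * Uᴴ := by
  obtain ⟨F, hF⟩ := exists_ne_zero hγ hγ'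
  set S := Smap γ γ' F with hSdef
  have hint : ∀ μ, γ' μ * S = S * γ μ := fun μ => intertwine hγ hγ' F μ
  have hs0 : γ 0 * γ 0 = 1 := sq0 hγ
  have hs0' : γ' 0 * γ' 0 = 1 := sq0 hγ'
  have hconj : ∀ μ, Sᴴ * (γ' 0 * γ' μ * γ' 0) = γ 0 * γ μ * γ 0 * Sᴴ := by
    intro μ
    have h := congrArg conjTranspose (hint μ)
    rw [conjTranspose_mul, conjTranspose_mul, hγ.2 μ, hγ'.2 μ] at h
    exact h
  set T := γ 0 * Sᴴ * γ' 0 with hTdef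
  have hTint : ∀ μ, T * γ' μ = γ μ * T := by
    intro μ
    have h1 : γ 0 * (Sᴴ * (γ' 0 * γ' μ * γ' 0)) * γ' 0
        = γ 0 * (γ 0 * γ μ * γ 0 * Sᴴ) * γ' 0 := by rw [hconj μ]
    simp only [← mul_assoc] at h1
    rw [mul_assoc (γ 0 * Sᴴ * γ' 0 * γ' μ) (γ' 0) (γ' 0), hs0', mul_one] at h1
    rw [show γ 0 * γ 0 * γ μ * γ 0 * Sᴴ * γ' 0 = (γ 0 * γ 0) * (γ μ * (γ 0 * Sᴴ * γ' 0))
        from by simp only [mul_assoc], hs0, one_mul] at h1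
    rw [hTdef, h1]
  have hM : ∀ μ, (T * S) * γ μ = γ μ * (T * S) := by
    intro μ
    rw [mul_assoc, ← hint μ, ← mul_assoc, hTint μ, mul_assoc]
  obtain ⟨c, hc⟩ := commute_scalar hγ hM
  have h2 : Sᴴ = γ 0 * T * γ' 0 := by
    have h3 : γ 0 * (γ 0 * Sᴴ * γ' 0) * γ' 0 = (γ 0 * γ 0) * Sᴴ * (γ' 0 * γ' 0) := by
      simp only [mul_assoc]
    rw [hTdef, h3, hs0, hs0', one_mul, mul_one]
  have hSS : Sᴴ * S = c • 1 := by
    rw [h2, mul_assoc (γ 0 * T) (γ' 0) S, hint 0, ← mul_assoc, mul_assoc (γ 0) T S, hc]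
    rw [Matrix.mul_smul, Matrix.smul_mul, mul_one, hs0]
  -- positivity of c
  set r : ℝ := ∑ j, ∑ k, Complex.normSq (S k j) with hrdef
  have htr2 : trace (Sᴴ * S) = (r : ℂ) := by
    simp only [Matrix.trace, Matrix.diag, Matrix.mul_apply, Matrix.conjTranspose_apply,
      hrdef]
    push_cast
    apply Finset.sum_congr rfl; intro j _
    apply Finset.sum_congr rfl; intro k _
    rw [Complex.normSq_eq_conj_mul_self]
    rfl
  have htr : trace (Sᴴ * S) = c * 4 := by
    rw [hSS, trace_smul, trace_one]
    simp [smul_eq_mul]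
  have hc4 : c * 4 = (r : ℂ) := by rw [← htr, htr2]
  have hrpos : 0 < r := by
    rcases lt_or_eq_of_le (show 0 ≤ r from Finset.sum_nonneg fun j _ =>
      Finset.sum_nonneg fun k _ => Complex.normSq_nonneg _) with h | h
    · exact h
    · exfalso
      apply hF
      ext k j
      have hz : ∀ j ∈ Finset.univ, ∀ k ∈ Finset.univ, Complex.normSq (S k j) = 0 := by
        intro j _ k _
        have := (Finset.sum_eq_zero_iff_of_nonneg (fun j _ => Finset.sum_nonneg
          fun k _ => Complex.normSq_nonneg _)).mp h.symm j (Finset.mem_univ j)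
        exact (Finset.sum_eq_zero_iff_of_nonneg fun k _ => Complex.normSq_nonneg _).mp
          this k (Finset.mem_univ k)
      have := hz j (Finset.mem_univ j) k (Finset.mem_univ k)
      simpa [Complex.normSq_eq_zero] using this
  -- build U
  set s : ℝ := 2 / Real.sqrt r with hsdef
  set U : M4 := (s : ℂ) • S with hUdef
  have hUint : ∀ μ, γ' μ * U = U * γ μ := by
    intro μ
    rw [hUdef, Matrix.mul_smul, Matrix.smul_mul, hint μ]
  have hstar : Uᴴ * U = 1 := by
    rw [hUdef, Matrix.conjTranspose_smul, Matrix.smul_mul, Matrix.mul_smul,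
      hSS, smul_smul, smul_smul]
    have : (starRingEnd ℂ) (s : ℂ) * ((s:ℂ) * c) = 1 := by
      rw [Complex.conj_ofReal]
      have hs2 : ((s:ℂ) * (s:ℂ)) = 4 / (r:ℂ) := by
        rw [hsdef]
        push_cast
        rw [div_mul_div_comm]
        congr 1
        · norm_num
        · rw [← Complex.ofReal_mul, Real.mul_self_sqrt hrpos.le]
      have hcr : c = (r:ℂ) / 4 := by linear_combination hc4 / 4
      rw [← mul_assoc, hs2, hcr]
      have hr0 : (r:ℂ) ≠ 0 := Complex.ofReal_ne_zero.mpr hrpos.ne'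
      field_simp
    rw [show star ((s:ℝ) : ℂ) * ((s:ℝ):ℂ) * c
        = (starRingEnd ℂ) ((s:ℝ):ℂ) * (((s:ℝ):ℂ) * c) from by
      rw [mul_assoc]; rfl, this, one_smul]
  have hmem : U ∈ Matrix.unitaryGroup (Fin 4) ℂ := by
    rw [Matrix.mem_unitaryGroup_iff']
    rw [Matrix.star_eq_conjTranspose]
    exact hstar
  have hUU : U * Uᴴ = 1 := by
    rw [mul_eq_one_comm]
    exact hstar
  refine ⟨U, hmem, fun μ => ?_⟩
  rw [show U * γ μ = γ' μ * U from (hUint μ).symm, mul_assoc, hUU, mul_one]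

end Pauli

/-- Any two sets of Dirac matrices are related by a unitary similarity
transformation: there is a unitary `U` with `γ̃^μ = U γ^μ U†` for all `μ`. -/
theorem dirac_unitary_equivalence (γ γ' : Fin 4 → Matrix (Fin 4) (Fin 4) ℂ)
    (hγ : IsDiracFamily γ) (hγ' : IsDiracFamily γ') :
    ∃ U : Matrix (Fin 4) (Fin 4) ℂ, U ∈ Matrix.unitaryGroup (Fin 4) ℂ ∧
      ∀ μ, γ' μ = U * γ μ * Uᴴ :=
  Pauli.main hγ hγ'
end

section
/- The sigma matrices satisfy σ^{μν} σ^{λρ} σ_{μν} = −4 σ^{λρ} for all λ, ρ ∈ {0,1,2,3}, where the sum runs over both repeated indices μ, ν from 0 to 3. -/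
open Matrix

/-!
For `μ ≠ ν` we have `σ^{μν} = i P` with `P = γ^μ γ^ν`, `P² = -g_{μμ} g_{νν}` and
`σ_{μν} = g_{μμ} g_{νν} σ^{μν}`. Since `γ^a γ^b = ± γ^b γ^a`, with sign `+` exactly when `a = b`,
`P` commutes with `σ^{λρ}` up to a product of four such signs, so each term
`σ^{μν} σ^{λρ} σ_{μν}` is `± σ^{λρ}`. For `λ ≠ ρ`, the pairs `{μ, ν}` equal to `{λ, ρ}` or to its
complement give `+`, the four pairs meeting `{λ, ρ}` in one index give `-`, and the twelve ordered
pairs add up to `2 (2 - 4) = -4`.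
-/

def commSign (a b : Fin 4) : ℤ := if a = b then 1 else -1

def pairSign (μ ν lam ρ : Fin 4) : ℤ :=
  commSign μ lam * commSign μ ρ * commSign ν lam * commSign ν ρ

theorem sum_pairSign_of_ne {lam ρ : Fin 4} (h : lam ≠ ρ) :
    ∑ μ, ∑ ν, (if μ = ν then 0 else pairSign μ ν lam ρ) = -4 := by
  revert lam ρ
  decide

theorem minkowski_mul_self (μ : Fin 4) : minkowski μ μ * minkowski μ μ = 1 := by
  simp only [minkowski, if_true]
  split_ifs <;> norm_num

def IsCliffordFamily {A : Type*} [Ring A] [Algebra ℂ A] (γ : Fin 4 → A) : Prop :=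
  ∀ μ ν, γ μ * γ ν + γ ν * γ μ = (2 * minkowski μ ν) • (1 : A)

section CliffordFamily

variable {A : Type*} [Ring A] [Algebra ℂ A] {γ : Fin 4 → A}

theorem gamma_mul_self (h : IsCliffordFamily γ) (μ : Fin 4) :
    γ μ * γ μ = minkowski μ μ • (1 : A) := by
  have h2 : (2 : ℂ) • (γ μ * γ μ) = (2 : ℂ) • (minkowski μ μ • (1 : A)) := by
    rw [two_smul, h, smul_smul]
  exact smul_right_injective A two_ne_zero h2

theorem gamma_mul_gamma_comm (h : IsCliffordFamily γ) (a b : Fin 4) :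
    γ a * γ b = commSign a b • (γ b * γ a) := by
  by_cases hab : a = b
  · subst hab
    simp [commSign]
  · have hz := h a b
    rw [minkowski, if_neg hab, mul_zero, zero_smul] at hz
    simp [commSign, hab, eq_neg_of_add_eq_zero_left hz]

theorem gamma_mul_gammaPair_comm (h : IsCliffordFamily γ) (a c d : Fin 4) :
    γ a * (γ c * γ d) = (commSign a c * commSign a d) • (γ c * γ d * γ a) := by
  rw [← mul_assoc, gamma_mul_gamma_comm h a c, smul_mul_assoc, mul_assoc,
    gamma_mul_gamma_comm h a d, mul_smul_comm, smul_smul, mul_assoc]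

theorem gammaPair_mul_gammaPair_comm (h : IsCliffordFamily γ) (a b c d : Fin 4) :
    γ a * γ b * (γ c * γ d) =
      (commSign a c * commSign a d * commSign b c * commSign b d) • (γ c * γ d * (γ a * γ b)) := by
  rw [mul_assoc, gamma_mul_gammaPair_comm h b, mul_smul_comm, ← mul_assoc,
    gamma_mul_gammaPair_comm h a, smul_mul_assoc, smul_smul]
  simp only [mul_assoc]
  congr 1
  ring

theorem gammaPair_mul_self (h : IsCliffordFamily γ) {a b : Fin 4} (hab : a ≠ b) :
    γ a * γ b * (γ a * γ b) = -(minkowski a a * minkowski b b) • (1 : A) := by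
  have hba : γ b * γ a = -(γ a * γ b) := by
    simpa [commSign, hab.symm] using gamma_mul_gamma_comm h b a
  calc γ a * γ b * (γ a * γ b) = -(γ a * γ a * (γ b * γ b)) := by
        rw [mul_assoc, ← mul_assoc (γ b), hba]
        noncomm_ring
    _ = -(minkowski a a * minkowski b b) • (1 : A) := by
        rw [gamma_mul_self h, gamma_mul_self h, smul_mul_smul_comm, one_mul, neg_smul]

end CliffordFamily

section Sigma

variable {γ : Fin 4 → Matrix (Fin 4) (Fin 4) ℂ}

theorem sigmaUp_self (μ : Fin 4) : sigmaUp γ μ μ = 0 := by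
  simp [sigmaUp]

theorem sigmaUp_of_ne (h : IsCliffordFamily γ) {μ ν : Fin 4} (hμν : μ ≠ ν) :
    sigmaUp γ μ ν = Complex.I • (γ μ * γ ν) := by
  have hνμ : γ ν * γ μ = -(γ μ * γ ν) := by
    simpa [commSign, hμν.symm] using gamma_mul_gamma_comm h ν μ
  rw [sigmaUp, hνμ, sub_neg_eq_add, ← two_smul ℂ, smul_smul, div_mul_cancel₀ _ two_ne_zero]

theorem sigmaLow_eq_smul_sigmaUp (μ ν : Fin 4) :
    sigmaLow γ μ ν = (minkowski μ μ * minkowski ν ν) • sigmaUp γ μ ν := by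
  simp [sigmaLow, minkowski, ite_smul, Finset.sum_ite_eq]

theorem gammaPair_mul_sigmaUp_comm (h : IsCliffordFamily γ) (a b c d : Fin 4) :
    γ a * γ b * sigmaUp γ c d = pairSign a b c d • (sigmaUp γ c d * (γ a * γ b)) := by
  have hdc : pairSign a b d c = pairSign a b c d := by
    simp only [pairSign]
    ring
  simp only [sigmaUp, mul_smul_comm, smul_mul_assoc, mul_sub, sub_mul,
    gammaPair_mul_gammaPair_comm h a b c d, gammaPair_mul_gammaPair_comm h a b d c]
  rw [← pairSign, ← pairSign, hdc, ← smul_sub, smul_comm]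

theorem sigmaUp_mul_mul_sigmaLow (h : IsCliffordFamily γ) (μ ν lam ρ : Fin 4) :
    sigmaUp γ μ ν * sigmaUp γ lam ρ * sigmaLow γ μ ν =
      (if μ = ν then 0 else pairSign μ ν lam ρ) • sigmaUp γ lam ρ := by
  split_ifs with hμν
  · rw [hμν, sigmaUp_self, zero_mul, zero_mul, zero_smul]
  rw [sigmaLow_eq_smul_sigmaUp, sigmaUp_of_ne h hμν]
  set c := minkowski μ μ * minkowski ν ν with hc
  have hcc : c * c = 1 := by
    rw [hc, mul_mul_mul_comm, minkowski_mul_self, minkowski_mul_self, one_mul]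
  calc Complex.I • (γ μ * γ ν) * sigmaUp γ lam ρ * (c • Complex.I • (γ μ * γ ν))
      = (Complex.I * Complex.I * c) • (γ μ * γ ν * sigmaUp γ lam ρ * (γ μ * γ ν)) := by
        simp only [smul_mul_assoc, mul_smul_comm, smul_smul]
        ring_nf
    _ = (-c) • pairSign μ ν lam ρ • (sigmaUp γ lam ρ * (γ μ * γ ν * (γ μ * γ ν))) := by
        rw [gammaPair_mul_sigmaUp_comm h, Complex.I_mul_I, neg_one_mul, smul_mul_assoc,
          mul_assoc]
    _ = pairSign μ ν lam ρ • sigmaUp γ lam ρ := by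
        rw [gammaPair_mul_self h hμν, mul_smul_comm, mul_one, smul_comm, smul_smul, neg_mul_neg,
          hcc, one_smul]

end Sigma

/-- `σ^{μν} σ^{λρ} σ_{μν} = -4 σ^{λρ}` (sum over the repeated indices `μ, ν`). -/
theorem sigma_sigma_sigma_contraction (γ : Fin 4 → Matrix (Fin 4) (Fin 4) ℂ)
    (hγ : IsDiracFamily γ) :
    ∀ lam ρ, ∑ μ, ∑ ν, sigmaUp γ μ ν * sigmaUp γ lam ρ * sigmaLow γ μ ν =
      (-4 : ℂ) • sigmaUp γ lam ρ := by
  intro lam ρ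
  by_cases hlr : lam = ρ
  · simp [hlr, sigmaUp_self]
  simp only [sigmaUp_mul_mul_sigmaLow hγ.1, ← Finset.sum_smul, sum_pairSign_of_ne hlr]
  rw [← Int.cast_smul_eq_zsmul ℂ]
  norm_num
end

section
/- Let γ^0, γ^1, γ^2, γ^3 be a set of Dirac matrices, and let C be a unitary 4×4 complex matrix satisfying C⁻¹ γ^μ C = −(γ^μ)^T for all μ = 0,1,2,3. Then C is antisymmetric: C^T = −C (equivalently, C* = −C⁻¹). -/
open Matrix

namespace DiracAux
variable {γ : Fin 4 → Matrix (Fin 4) (Fin 4) ℂ}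

lemma mink_ne_zero (μ : Fin 4) : minkowski μ μ ≠ 0 := by
  fin_cases μ <;> simp [minkowski]

lemma sq_eq (hγ : IsDiracFamily γ) (μ : Fin 4) :
    γ μ * γ μ = minkowski μ μ • (1 : Matrix (Fin 4) (Fin 4) ℂ) := by
  have h := hγ.1 μ μ
  have h2 : (2:ℂ) • (γ μ * γ μ) = (2 * minkowski μ μ) • (1 : Matrix (Fin 4) (Fin 4) ℂ) := by
    rw [two_smul]; linear_combination (norm := abel) h
  have := congrArg (fun X => (2:ℂ)⁻¹ • X) h2
  simpa [smul_smul, mul_comm, mul_assoc] using this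

lemma anticomm (hγ : IsDiracFamily γ) {μ ν : Fin 4} (h : μ ≠ ν) :
    γ μ * γ ν = -(γ ν * γ μ) := by
  have h1 := hγ.1 μ ν
  rw [minkowski, if_neg h] at h1
  simp at h1
  exact eq_neg_of_add_eq_zero_left h1

noncomputable def P (γ : Fin 4 → Matrix (Fin 4) (Fin 4) ℂ) (L : List (Fin 4)) :
    Matrix (Fin 4) (Fin 4) ℂ := (L.map γ).prod

@[simp] lemma P_nil : P γ [] = 1 := rfl
@[simp] lemma P_cons (i : Fin 4) (L : List (Fin 4)) : P γ (i :: L) = γ i * P γ L := by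
  simp [P]
lemma P_append (L M : List (Fin 4)) : P γ (L ++ M) = P γ L * P γ M := by
  simp [P]

lemma move (hγ : IsDiracFamily γ) (L : List (Fin 4)) (j : Fin 4) :
    γ j * P γ L = ((-1:ℂ) ^ (L.countP (fun i => i ≠ j))) • (P γ L * γ j) := by
  induction L with
  | nil => simp
  | cons i L ih =>
    set c := L.countP (fun i => i ≠ j) with hc
    by_cases hij : i = j
    · subst hij
      have hcount : List.countP (fun a => decide (a ≠ i)) (i :: L) = c := by
        simp [List.countP_cons, hc]
      rw [hcount, P_cons, ← mul_assoc, sq_eq hγ i, smul_mul_assoc, one_mul]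
      have key : (γ i * P γ L) * γ i = ((-1:ℂ)^c) • (minkowski i i • P γ L) := by
        rw [ih, smul_mul_assoc, mul_assoc, sq_eq hγ i, mul_smul_comm, mul_one]
      rw [key, smul_smul, smul_smul, ← pow_add, ← two_mul, pow_mul]
      norm_num
    · have hcount : List.countP (fun a => decide (a ≠ j)) (i :: L) = c + 1 := by
        simp [List.countP_cons, hij, hc]
      rw [hcount, P_cons, ← mul_assoc, anticomm hγ (show j ≠ i from Ne.symm hij),
        neg_mul, mul_assoc, ih, mul_smul_comm, pow_succ]
      rw [mul_comm ((-1:ℂ)^c) (-1), mul_assoc, neg_one_mul, neg_smul]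

lemma trace_P_zero (hγ : IsDiracFamily γ) (L : List (Fin 4)) (j : Fin 4)
    (h : Odd (L.countP (fun i => i ≠ j))) : trace (P γ L) = 0 := by
  have hm := move hγ L j
  rw [Odd.neg_one_pow h] at hm
  rw [neg_one_smul] at hm
  have hz : trace (γ j * γ j * P γ L) = 0 := by
    have e1 : γ j * γ j * P γ L = -(γ j * P γ L * γ j) := by
      rw [mul_assoc, hm]
      simp only [mul_neg, neg_neg, neg_mul]
      rw [← mul_assoc, hm, neg_mul, neg_neg, mul_assoc]
    have e2 : trace (γ j * P γ L * γ j) = trace (γ j * γ j * P γ L) := by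
      rw [trace_mul_comm, ← mul_assoc]
    have := congrArg trace e1
    rw [trace_neg, e2] at this
    have h0 : (2:ℂ) * trace (γ j * γ j * P γ L) = 0 := by ring_nf; linear_combination this
    simpa using h0
  have hms : minkowski j j • trace (P γ L) = 0 := by
    rw [← trace_smul,
      show minkowski j j • P γ L = γ j * γ j * P γ L from by
        rw [sq_eq hγ j, smul_mul_assoc, one_mul], hz]
  exact (smul_eq_zero.mp hms).resolve_left (mink_ne_zero j)

lemma countP_ne_of_not_mem {L : List (Fin 4)} {i : Fin 4} (h : i ∉ L) :
    L.countP (fun a => a ≠ i) = L.length := by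
  rw [List.countP_eq_length]
  intro a ha
  simp only [decide_eq_true_eq]
  exact fun e => h (e ▸ ha)

lemma P_sq (hγ : IsDiracFamily γ) (L : List (Fin 4)) (h : L.Nodup) :
    ∃ c : ℂ, c ≠ 0 ∧ P γ L * P γ L = c • 1 := by
  induction L with
  | nil => exact ⟨1, one_ne_zero, by simp⟩
  | cons i L ih =>
    obtain ⟨hi, hL⟩ := List.nodup_cons.mp h
    obtain ⟨c, hc, hcc⟩ := ih hL
    refine ⟨(-1:ℂ)^L.length * minkowski i i * c, by
      simp [hc, mink_ne_zero i, pow_ne_zero], ?_⟩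
    have hmove : γ i * P γ L = ((-1:ℂ)^L.length) • (P γ L * γ i) := by
      rw [move hγ L i, countP_ne_of_not_mem hi]
    calc P γ (i :: L) * P γ (i :: L) = γ i * ((P γ L * γ i) * P γ L) := by
          rw [P_cons]; simp [mul_assoc]
      _ = ((-1:ℂ)^L.length) • (γ i * γ i * (P γ L * P γ L)) := by
          have hmove' : P γ L * γ i = ((-1:ℂ)^L.length) • (γ i * P γ L) := by
            rw [hmove, smul_smul, ← pow_add, ← two_mul, pow_mul]; norm_num
          rw [hmove']; simp [smul_mul_assoc, mul_smul_comm, mul_assoc]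
      _ = ((-1:ℂ)^L.length * minkowski i i * c) • 1 := by
          rw [sq_eq hγ i, hcc]; simp [smul_smul]; ring_nf

def listOf (S : Finset (Fin 4)) : List (Fin 4) := (List.finRange 4).filter (· ∈ S)

lemma nodup_listOf (S : Finset (Fin 4)) : (listOf S).Nodup :=
  (List.nodup_finRange 4).filter _

set_option maxRecDepth 10000 in
lemma parity_exists : ∀ S T : Finset (Fin 4), S ≠ T →
    ∃ j : Fin 4, Odd ((listOf S ++ listOf T).countP (fun i => i ≠ j)) := by decide

set_option maxRecDepth 10000 in
lemma mySignSum : (∑ S : Finset (Fin 4),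
    (-1:ℤ)^((listOf S).length + ((listOf S).length.choose 2)) ) = -4 := by decide

/-- the 16 basis matrices -/
noncomputable def G (γ : Fin 4 → Matrix (Fin 4) (Fin 4) ℂ) (S : Finset (Fin 4)) :
    Matrix (Fin 4) (Fin 4) ℂ := P γ (listOf S)

lemma trace_G_mul_G (hγ : IsDiracFamily γ) {S T : Finset (Fin 4)} (h : S ≠ T) :
    trace (G γ S * G γ T) = 0 := by
  obtain ⟨j, hj⟩ := parity_exists S T h
  rw [G, G, ← P_append]
  exact trace_P_zero hγ _ j hj

lemma indepG (hγ : IsDiracFamily γ) : LinearIndependent ℂ (G γ) := by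
  rw [Fintype.linearIndependent_iff]
  intro g hsum T
  obtain ⟨c, hc, hcc⟩ := P_sq hγ (listOf T) (nodup_listOf T)
  have h1 : trace ((∑ S, g S • G γ S) * G γ T) = 0 := by rw [hsum, zero_mul, trace_zero]
  rw [Finset.sum_mul] at h1
  simp only [smul_mul_assoc] at h1
  rw [trace_sum] at h1
  rw [Finset.sum_eq_single_of_mem T (Finset.mem_univ T)] at h1
  · rw [trace_smul] at h1
    have h4 : trace (G γ T * G γ T) ≠ 0 := by
      rw [show G γ T * G γ T = c • 1 from hcc]
      simp [hc]
    exact (smul_eq_zero.mp h1).resolve_right h4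
  · intro S _ hST
    rw [trace_smul, trace_G_mul_G hγ hST, smul_zero]

lemma P_reverse (hγ : IsDiracFamily γ) (L : List (Fin 4)) (h : L.Nodup) :
    P γ L.reverse = ((-1:ℂ)^(L.length.choose 2)) • P γ L := by
  induction L with
  | nil => simp
  | cons i L ih =>
    obtain ⟨hi, hL⟩ := List.nodup_cons.mp h
    have hmove : γ i * P γ L = ((-1:ℂ)^L.length) • (P γ L * γ i) := by
      rw [move hγ L i, countP_ne_of_not_mem hi]
    have hmove' : P γ L * γ i = ((-1:ℂ)^L.length) • (γ i * P γ L) := by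
      rw [hmove, smul_smul, ← pow_add, ← two_mul, pow_mul]; norm_num
    rw [List.reverse_cons, P_append, ih hL]
    have hPi : P γ [i] = γ i := by simp [P]
    rw [hPi, smul_mul_assoc, hmove', smul_smul, ← pow_add, P_cons]
    congr 2
    rw [List.length_cons]
    rw [Nat.choose_succ_succ, Nat.choose_one_right]
    ring

lemma commute_P {D : Matrix (Fin 4) (Fin 4) ℂ} (hD : ∀ μ, D * γ μ = γ μ * D)
    (L : List (Fin 4)) : D * P γ L = P γ L * D := by
  induction L with
  | nil => simp
  | cons i L ih => rw [P_cons, ← mul_assoc, hD i, mul_assoc, ih, ← mul_assoc]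

lemma schur (hγ : IsDiracFamily γ) {D : Matrix (Fin 4) (Fin 4) ℂ}
    (hD : ∀ μ, D * γ μ = γ μ * D) : ∃ lam : ℂ, D = lam • 1 := by
  have card_eq : Fintype.card (Finset (Fin 4)) = Module.finrank ℂ (Matrix (Fin 4) (Fin 4) ℂ) := by
    simp [Module.finrank_matrix]
  let b := basisOfLinearIndependentOfCardEqFinrank (indepG hγ) card_eq
  have hb : ∀ S, b S = G γ S := by
    intro S
    rw [show b = _ from rfl, coe_basisOfLinearIndependentOfCardEqFinrank]
  have hcom : ∀ X : Matrix (Fin 4) (Fin 4) ℂ, D * X = X * D := by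
    intro X
    have hX := Module.Basis.sum_repr b X
    rw [← hX, Finset.mul_sum, Finset.sum_mul]
    refine Finset.sum_congr rfl fun S _ => ?_
    rw [mul_smul_comm, smul_mul_assoc, hb, G, commute_P hD]
  obtain ⟨lam, hlam⟩ := Matrix.mem_range_scalar_of_commute_single
    (M := D) (fun i j _ => (hcom _).symm)
  exact ⟨lam, by rw [← hlam, Matrix.scalar_apply]; simp [Matrix.smul_eq_diagonal_mul]⟩

end DiracAux


noncomputable def Tlin : Matrix (Fin 4) (Fin 4) ℂ →ₗ[ℂ] Matrix (Fin 4) (Fin 4) ℂ where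
  toFun := Matrix.transpose
  map_add' := fun x y => transpose_add x y
  map_smul' := fun c x => transpose_smul c x

lemma transpose_stdBasisMatrix (i j : Fin 4) :
    (single i j (1:ℂ))ᵀ = single j i 1 := by
  ext a b
  simp [Matrix.single, Matrix.transpose_apply, and_comm]

lemma trace_Tlin : LinearMap.trace ℂ _ Tlin = 4 := by
  rw [LinearMap.trace_eq_matrix_trace ℂ (Matrix.stdBasis ℂ (Fin 4) (Fin 4)) Tlin]
  rw [Matrix.trace]
  have : ∀ p : Fin 4 × Fin 4,
      (LinearMap.toMatrix (Matrix.stdBasis ℂ (Fin 4) (Fin 4)) (Matrix.stdBasis ℂ (Fin 4) (Fin 4)) Tlin) p p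
      = if p.1 = p.2 then 1 else 0 := by
    rintro ⟨i, j⟩
    rw [LinearMap.toMatrix_apply]
    have h1 : Tlin ((Matrix.stdBasis ℂ (Fin 4) (Fin 4)) (i, j)) = (Matrix.stdBasis ℂ (Fin 4) (Fin 4)) (j, i) := by
      rw [Matrix.stdBasis_eq_single, Matrix.stdBasis_eq_single]
      exact transpose_stdBasisMatrix i j
    rw [h1, Module.Basis.repr_self]
    by_cases h : i = j
    · subst h; simp
    · rw [Finsupp.single_apply, if_neg (by simp [h, Ne.symm h]), if_neg h]
  simp only [Matrix.diag]
  rw [Finset.sum_congr rfl (fun p _ => this p)]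
  rw [Fintype.sum_prod_type]
  simp [Finset.sum_ite_eq]

/-- If `C` is a unitary matrix with `C⁻¹ γ^μ C = -(γ^μ)ᵀ` for all `μ`,
then `C` is antisymmetric: `Cᵀ = -C` (equivalently, the entrywise conjugate `C*` equals
`-C⁻¹`). -/

theorem conjugation_matrix_antisymmetric (γ : Fin 4 → Matrix (Fin 4) (Fin 4) ℂ)
    (hγ : IsDiracFamily γ) (C : Matrix (Fin 4) (Fin 4) ℂ)
    (hC : C ∈ Matrix.unitaryGroup (Fin 4) ℂ)
    (hCγ : ∀ μ, C⁻¹ * γ μ * C = -(γ μ)ᵀ) :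
    Cᵀ = -C ∧ C.map (starRingEnd ℂ) = -C⁻¹ := by
  open DiracAux in
  have hC1 : star C * C = 1 := Matrix.mem_unitaryGroup_iff'.mp hC
  have hC2 : C * star C = 1 := Matrix.mem_unitaryGroup_iff.mp hC
  have hCinv : C⁻¹ = star C := Matrix.inv_eq_left_inv hC1
  have hmul1 : C⁻¹ * C = 1 := by rw [hCinv]; exact hC1
  have hmul2 : C * C⁻¹ = 1 := by rw [hCinv]; exact hC2
  have hK2 : (C⁻¹)ᵀ * Cᵀ = 1 := by rw [← transpose_mul, hmul2, transpose_one]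
  have hK1 : Cᵀ * (C⁻¹)ᵀ = 1 := by rw [← transpose_mul, hmul1, transpose_one]
  have hc1 : ∀ X, C⁻¹ * (C * X) = X := fun X => by rw [← mul_assoc, hmul1, one_mul]
  have hc2 : ∀ X, C * (C⁻¹ * X) = X := fun X => by rw [← mul_assoc, hmul2, one_mul]
  have hk1 : ∀ X, Cᵀ * ((C⁻¹)ᵀ * X) = X := fun X => by rw [← mul_assoc, hK1, one_mul]
  have hk2 : ∀ X, (C⁻¹)ᵀ * (Cᵀ * X) = X := fun X => by rw [← mul_assoc, hK2, one_mul]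
  have γT : ∀ μ, (γ μ)ᵀ = -(C⁻¹ * γ μ * C) := fun μ => by rw [hCγ μ, neg_neg]
  -- D = Cᵀ C⁻¹ commutes with all gammas
  have hcomm : ∀ μ, (Cᵀ * C⁻¹) * γ μ = γ μ * (Cᵀ * C⁻¹) := by
    intro μ
    have h0 := congrArg Matrix.transpose (hCγ μ)
    rw [transpose_mul, transpose_mul, transpose_neg, transpose_transpose, γT μ] at h0
    simp only [neg_mul, mul_neg, neg_inj] at h0
    conv_rhs => rw [← h0]
    simp only [mul_assoc, hk2, hmul2, mul_one]
  obtain ⟨lam, hlam⟩ := DiracAux.schur hγ hcomm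
  have hCT : Cᵀ = lam • C := by
    have h1 : Cᵀ = (Cᵀ * C⁻¹) * C := by rw [mul_assoc, hmul1, mul_one]
    rw [h1, hlam, smul_mul_assoc, one_mul]
  -- transpose of products of gammas
  have PT : ∀ L : List (Fin 4),
      (DiracAux.P γ L)ᵀ = ((-1:ℂ)^L.length) • (C⁻¹ * DiracAux.P γ L.reverse * C) := by
    intro L
    induction L with
    | nil => simp [hmul1]
    | cons i L ih =>
      rw [DiracAux.P_cons, transpose_mul, ih, γT i, List.reverse_cons,
        DiracAux.P_append, List.length_cons, pow_succ]
      have hPi : DiracAux.P γ [i] = γ i := by simp [DiracAux.P]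
      rw [hPi]
      simp only [smul_mul_assoc, mul_neg, neg_mul, mul_assoc, hc2, smul_smul]
      simp
  -- eigenvalue relation for the 16 basis matrices times C
  set e : Finset (Fin 4) → ℕ :=
    fun S => (DiracAux.listOf S).length + ((DiracAux.listOf S).length.choose 2) with he
  have heig : ∀ S : Finset (Fin 4),
      (DiracAux.G γ S * C)ᵀ = (lam * (-1:ℂ)^(e S)) • (DiracAux.G γ S * C) := by
    intro S
    rw [transpose_mul, hCT, DiracAux.G, PT,
      DiracAux.P_reverse hγ _ (DiracAux.nodup_listOf S)]
    simp only [smul_mul_assoc, mul_smul_comm, smul_smul, mul_assoc, hc2]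
    rw [he, pow_add]
    congr 1
    ring
  -- the basis from the 16 matrices times C
  have hCRinj : Function.Injective (LinearMap.mulRight ℂ C) := by
    intro X Y h
    have h2 := congrArg (fun Z => Z * C⁻¹) h
    simpa [LinearMap.mulRight_apply, mul_assoc, hmul2] using h2
  have indep2 : LinearIndependent ℂ (fun S : Finset (Fin 4) => DiracAux.G γ S * C) := by
    have h3 := (DiracAux.indepG hγ).map' (LinearMap.mulRight ℂ C)
      (LinearMap.ker_eq_bot.mpr hCRinj)
    simpa [Function.comp_def, LinearMap.mulRight_apply] using h3
  have card_eq : Fintype.card (Finset (Fin 4))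
      = Module.finrank ℂ (Matrix (Fin 4) (Fin 4) ℂ) := by
    simp [Module.finrank_matrix]
  let b2 := basisOfLinearIndependentOfCardEqFinrank indep2 card_eq
  have hb2 : ∀ S, b2 S = DiracAux.G γ S * C := by
    intro S
    rw [show b2 = _ from rfl, coe_basisOfLinearIndependentOfCardEqFinrank]
  -- trace of the transpose endomorphism, two ways
  have htr2 : LinearMap.trace ℂ _ Tlin = ∑ S : Finset (Fin 4), (lam * (-1:ℂ)^(e S)) := by
    rw [LinearMap.trace_eq_matrix_trace ℂ b2 Tlin, Matrix.trace]
    refine Finset.sum_congr rfl fun S _ => ?_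
    rw [Matrix.diag, LinearMap.toMatrix_apply]
    have h4 : Tlin (b2 S) = (lam * (-1:ℂ)^(e S)) • b2 S := by
      show (b2 S)ᵀ = _
      rw [hb2 S, heig S]
    rw [h4, _root_.map_smul, Module.Basis.repr_self]
    simp
  have hεsum : (∑ S : Finset (Fin 4), (-1:ℂ)^(e S)) = -4 := by
    have h5 : (((∑ S : Finset (Fin 4), (-1:ℤ)^(e S)) : ℤ) : ℂ)
        = ∑ S : Finset (Fin 4), (-1:ℂ)^(e S) := by push_cast; rfl
    rw [← h5, he, DiracAux.mySignSum]
    norm_num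
  have h6 : lam * (-4) = 4 := by
    rw [← hεsum, Finset.mul_sum, ← htr2]
    exact trace_Tlin
  have hlamneg : lam = -1 := by linear_combination (-(1:ℂ)/4) * h6
  have part1 : Cᵀ = -C := by rw [hCT, hlamneg, neg_smul, one_smul]
  refine ⟨part1, ?_⟩
  have hmap : C.map (starRingEnd ℂ) = (C⁻¹)ᵀ := by
    rw [hCinv]
    ext i j
    simp [Matrix.map_apply, Matrix.transpose_apply, Matrix.star_eq_conjTranspose,
      Matrix.conjTranspose_apply]
  rw [hmap]
  have h7 : (C⁻¹)ᵀ * (-C) = 1 := by rw [← part1]; exact hK2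
  have h8 := congrArg (fun X => X * C⁻¹) h7
  simp only [mul_neg, neg_mul, one_mul, mul_assoc, hmul2, mul_one] at h8
  exact neg_eq_iff_eq_neg.mp h8
end

section
/- The spin sum (completeness) relations hold: Σ_{s ∈ {+1,−1}} u_s(p) ū_s(p) = p·γ + m I and Σ_{s ∈ {+1,−1}} v_s(p) v̄_s(p) = p·γ − m I, where w w̄ denotes the 4×4 outer-product matrix of the column vector w with the row vector w̄ = w† γ^0. -/
open Matrix

/-- The energy `E_p = √(|p|² + m²)`. -/
noncomputable def energy (m : ℝ) (p : Fin 3 → ℝ) : ℝ :=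
  Real.sqrt (p 0 ^ 2 + p 1 ^ 2 + p 2 ^ 2 + m ^ 2)

/-- The normalization factor `N_p = 1/√(E_p + m)`. -/
noncomputable def normFactor (m : ℝ) (p : Fin 3 → ℝ) : ℝ :=
  1 / Real.sqrt (energy m p + m)

/-- `p·γ = E_p γ^0 - p_1 γ^1 - p_2 γ^2 - p_3 γ^3` (the spatial momentum `p` is indexed by
`Fin 3`, so `p 0, p 1, p 2` are its components `p_1, p_2, p_3`). -/
noncomputable def pSlash (γ : Fin 4 → Matrix (Fin 4) (Fin 4) ℂ) (m : ℝ) (p : Fin 3 → ℝ) :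
    Matrix (Fin 4) (Fin 4) ℂ :=
  (energy m p : ℂ) • γ 0 - (p 0 : ℂ) • γ 1 - (p 1 : ℂ) • γ 2 - (p 2 : ℂ) • γ 3

/-- The spinor `u_s(p) = N_p (p·γ + m I) ξ_s`; the label `s ∈ {+1, -1}` is an element
of `ℤˣ`. -/
noncomputable def uSpinor (γ : Fin 4 → Matrix (Fin 4) (Fin 4) ℂ) (ξ : ℤˣ → Fin 4 → ℂ)
    (m : ℝ) (p : Fin 3 → ℝ) (s : ℤˣ) : Fin 4 → ℂ :=
  (normFactor m p : ℂ) • ((pSlash γ m p + (m : ℂ) • 1) *ᵥ ξ s)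

/-- The spinor `v_s(p) = N_p (-p·γ + m I) χ_{-s}`; the label `s ∈ {+1, -1}` is an element
of `ℤˣ`. -/
noncomputable def vSpinor (γ : Fin 4 → Matrix (Fin 4) (Fin 4) ℂ) (χ : ℤˣ → Fin 4 → ℂ)
    (m : ℝ) (p : Fin 3 → ℝ) (s : ℤˣ) : Fin 4 → ℂ :=
  (normFactor m p : ℂ) • ((-pSlash γ m p + (m : ℂ) • 1) *ᵥ χ (-s))


section SpinSumAux

open Matrix

private lemma vmv_mulVec (A : Matrix (Fin 4) (Fin 4) ℂ) (x y : Fin 4 → ℂ) :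
    vecMulVec (A *ᵥ x) y = A * vecMulVec x y := by
  ext i j; simp [vecMulVec, mul_apply, mulVec, dotProduct, Finset.sum_mul, mul_assoc]

private lemma vmv_vecMul (A : Matrix (Fin 4) (Fin 4) ℂ) (x y : Fin 4 → ℂ) :
    vecMulVec x (y ᵥ* A) = vecMulVec x y * A := by
  ext i j
  simp [vecMulVec, mul_apply, vecMul, dotProduct, Finset.mul_sum, mul_assoc, mul_comm,
    mul_left_comm]

private lemma vmv_smul (c d : ℂ) (x y : Fin 4 → ℂ) :
    vecMulVec (c • x) (d • y) = (c*d) • vecMulVec x y := by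
  ext i j; simp [vecMulVec, smul_eq_mul]; ring

private lemma outer_transform (A G : Matrix (Fin 4) (Fin 4) ℂ) (c : ℝ) (x : Fin 4 → ℂ) :
    vecMulVec ((c:ℂ) • (A *ᵥ x)) (star ((c:ℂ) • (A *ᵥ x)) ᵥ* G)
      = ((c:ℂ)*(c:ℂ)) • (A * (vecMulVec x (star x) * (Aᴴ * G))) := by
  rw [star_smul, star_mulVec, Complex.star_def, Complex.conj_ofReal, smul_vecMul,
    vecMul_vecMul, vmv_smul, vmv_mulVec, vmv_vecMul]

private lemma units_sum {M : Type*} [AddCommMonoid M] (f : ℤˣ → M) :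
    ∑ s : ℤˣ, f s = f 1 + f (-1) := by
  rw [show (Finset.univ : Finset ℤˣ) = {1, -1} from by decide]
  simp

end SpinSumAux

/-- The spin sums (completeness relations):
`Σ_s u_s(p) ū_s(p) = p·γ + m I` and `Σ_s v_s(p) v̄_s(p) = p·γ - m I`, where
`w̄ = w† γ^0` and `w w̄` is the outer product. -/
theorem spinor_spin_sums
    (γ : Fin 4 → Matrix (Fin 4) (Fin 4) ℂ) (hγ : IsDiracFamily γ)
    (ξ χ : ℤˣ → Fin 4 → ℂ)
    (hξ0 : ∀ s, γ 0 *ᵥ ξ s = ξ s) (hχ0 : ∀ s, γ 0 *ᵥ χ s = -χ s)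
    (hξ12 : ∀ s, sigmaUp γ 1 2 *ᵥ ξ s = ((s : ℤ) : ℂ) • ξ s)
    (hχ12 : ∀ s, sigmaUp γ 1 2 *ᵥ χ s = ((s : ℤ) : ℂ) • χ s)
    (hξξ : ∀ s s', star (ξ s) ⬝ᵥ ξ s' = if s = s' then 1 else 0)
    (hχχ : ∀ s s', star (χ s) ⬝ᵥ χ s' = if s = s' then 1 else 0)
    (hξχ : ∀ s s', star (ξ s) ⬝ᵥ χ s' = 0)
    (hχξ : ∀ s s', star (χ s) ⬝ᵥ ξ s' = 0)
    (m : ℝ) (hm : 0 < m)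
    (p : Fin 3 → ℝ) :
    (∑ s : ℤˣ, Matrix.vecMulVec (uSpinor γ ξ m p s) (star (uSpinor γ ξ m p s) ᵥ* γ 0) =
      pSlash γ m p + (m : ℂ) • 1) ∧
    (∑ s : ℤˣ, Matrix.vecMulVec (vSpinor γ χ m p s) (star (vSpinor γ χ m p s) ᵥ* γ 0) =
      pSlash γ m p - (m : ℂ) • 1) := by
  
  obtain ⟨hA, hH⟩ := hγ
  -- basic gamma algebra
  have sq : ∀ μ, γ μ * γ μ = minkowski μ μ • 1 := by
    intro μ
    have h2 : (2:ℂ) • (γ μ * γ μ) = (2:ℂ) • (minkowski μ μ • (1:Matrix (Fin 4) (Fin 4) ℂ)) := by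
      rw [two_smul, two_smul]; simpa [two_mul, add_smul] using hA μ μ
    exact smul_right_injective _ two_ne_zero h2
  have h00 : γ 0 * γ 0 = 1 := by simpa [minkowski] using sq 0
  have h11 : γ 1 * γ 1 = -1 := by simpa [minkowski] using sq 1
  have h22 : γ 2 * γ 2 = -1 := by simpa [minkowski] using sq 2
  have h33 : γ 3 * γ 3 = -1 := by simpa [minkowski] using sq 3
  have anti : ∀ μ ν, μ ≠ ν → γ ν * γ μ = -(γ μ * γ ν) := by
    intro μ ν h
    have := hA μ ν
    simp [minkowski, h] at this
    exact eq_neg_of_add_eq_zero_right this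
  have h10 : γ 1 * γ 0 = -(γ 0 * γ 1) := anti 0 1 (by decide)
  have h20 : γ 2 * γ 0 = -(γ 0 * γ 2) := anti 0 2 (by decide)
  have h30 : γ 3 * γ 0 = -(γ 0 * γ 3) := anti 0 3 (by decide)
  have h21 : γ 2 * γ 1 = -(γ 1 * γ 2) := anti 1 2 (by decide)
  have h31 : γ 3 * γ 1 = -(γ 1 * γ 3) := anti 1 3 (by decide)
  have h32 : γ 3 * γ 2 = -(γ 2 * γ 3) := anti 2 3 (by decide)
  have hγ0H : (γ 0)ᴴ = γ 0 := by rw [hH 0, h00, one_mul]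
  have hE2 : ((energy m p :ℝ):ℂ)^2 = (p 0:ℂ)^2 + (p 1:ℂ)^2 + (p 2:ℂ)^2 + (m:ℂ)^2 := by
    have h : (energy m p)^2 = p 0^2 + p 1^2 + p 2^2 + m^2 := Real.sq_sqrt (by positivity)
    exact_mod_cast congrArg (Complex.ofReal ·) h
  set E := energy m p with hEdef
  set Nn := normFactor m p with hNdef
  set P := pSlash γ m p with hPdef
  have hPP : P * P = ((m:ℂ)^2) • 1 := by
    rw [hPdef, pSlash]
    simp only [sub_mul, mul_sub, smul_mul_assoc, mul_smul_comm, smul_smul,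
      h10, h20, h30, h21, h31, h32, h00, h11, h22, h33]
    match_scalars <;> first | ring1 | linear_combination hE2
  have hPg : P * γ 0 = (2*(E:ℂ)) • 1 - γ 0 * P := by
    have : P * γ 0 + γ 0 * P = (2*(E:ℂ)) • 1 := by
      rw [hPdef, pSlash]
      simp only [sub_mul, mul_sub, smul_mul_assoc, mul_smul_comm, smul_smul,
        h10, h20, h30, h21, h31, h32, h00, h11, h22, h33]
      match_scalars <;> ring1
    exact eq_sub_of_add_eq this
  have hPH : Pᴴ = γ 0 * P * γ 0 := by
    rw [hPdef, pSlash]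
    simp only [conjTranspose_sub, conjTranspose_smul, hH, Complex.star_def,
      Complex.conj_ofReal, mul_sub, sub_mul, mul_smul_comm, smul_mul_assoc]
  set Q := P + (m:ℂ) • (1 : Matrix (Fin 4) (Fin 4) ℂ) with hQdef
  set R := -P + (m:ℂ) • (1 : Matrix (Fin 4) (Fin 4) ℂ) with hRdef
  have hQH : Qᴴ * γ 0 = γ 0 * Q := by
    rw [hQdef]
    simp only [conjTranspose_add, conjTranspose_smul, conjTranspose_one, hPH,
      Complex.star_def, Complex.conj_ofReal, add_mul, mul_add, smul_mul_assoc,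
      mul_smul_comm, one_mul, mul_one, mul_assoc, h00]
  have hRH : Rᴴ * γ 0 = γ 0 * R := by
    rw [hRdef]
    simp only [conjTranspose_add, conjTranspose_neg, conjTranspose_smul, conjTranspose_one,
      hPH, Complex.star_def, Complex.conj_ofReal, add_mul, mul_add, neg_mul, mul_neg,
      smul_mul_assoc, mul_smul_comm, one_mul, mul_one, mul_assoc, h00]
  have hQQ : Q * Q = (2*(m:ℂ)) • Q := by
    rw [hQdef]
    simp only [add_mul, mul_add, smul_mul_assoc, mul_smul_comm, one_mul, mul_one, hPP]
    module
  have hRR : R * R = (2*(m:ℂ)) • R := by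
    rw [hRdef]
    simp only [add_mul, mul_add, neg_mul, mul_neg, smul_mul_assoc, mul_smul_comm,
      one_mul, mul_one, neg_neg, hPP]
    module
  have hQgQ : Q * γ 0 * Q = (2*(E:ℂ)) • Q := by
    rw [hQdef]
    simp only [add_mul, mul_add, smul_mul_assoc, mul_smul_comm, one_mul, mul_one, hPg,
      sub_mul, smul_smul]
    rw [mul_assoc (γ 0) P P, hPP]
    simp only [mul_smul_comm, mul_one, sub_mul, smul_mul_assoc, one_mul]
    module
  have hRgR : R * γ 0 * R = (-(2*(E:ℂ))) • R := by
    rw [hRdef]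
    simp only [add_mul, mul_add, neg_mul, mul_neg, smul_mul_assoc, mul_smul_comm,
      one_mul, mul_one, hPg, sub_mul, smul_smul, neg_neg, neg_sub]
    rw [mul_assoc (γ 0) P P, hPP]
    simp only [mul_smul_comm, mul_one, sub_mul, smul_mul_assoc, one_mul]
    module
  -- completeness of the spinor basis
  set b : Fin 4 → Fin 4 → ℂ := ![ξ 1, ξ (-1), χ 1, χ (-1)] with hb
  set U : Matrix (Fin 4) (Fin 4) ℂ := Matrix.of (fun i j => b j i) with hU
  have hUHU : Uᴴ * U = 1 := by
    ext j k
    have : (Uᴴ * U) j k = star (b j) ⬝ᵥ b k := by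
      simp [mul_apply, conjTranspose_apply, hU, dotProduct]
    rw [this]
    fin_cases j <;> fin_cases k <;>
      simp [hb, hξξ, hχχ, hξχ, hχξ, Matrix.one_apply]
  have hcomp : vecMulVec (ξ 1) (star (ξ 1)) + vecMulVec (ξ (-1)) (star (ξ (-1)))
      + (vecMulVec (χ 1) (star (χ 1)) + vecMulVec (χ (-1)) (star (χ (-1)))) = 1 := by
    have hUUH : U * Uᴴ = 1 := mul_eq_one_comm.mp hUHU
    ext i k
    have h := congrFun (congrFun hUUH i) k
    simp only [mul_apply, conjTranspose_apply, hU, Matrix.of_apply, Fin.sum_univ_four] at h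
    simp only [Matrix.add_apply, vecMulVec_apply]
    rw [← h]
    simp [hb]
    ring
  set Sξ := vecMulVec (ξ 1) (star (ξ 1)) + vecMulVec (ξ (-1)) (star (ξ (-1))) with hSξ
  set Sχ := vecMulVec (χ 1) (star (χ 1)) + vecMulVec (χ (-1)) (star (χ (-1))) with hSχ
  have hgvx : ∀ s, γ 0 * vecMulVec (ξ s) (star (ξ s)) = vecMulVec (ξ s) (star (ξ s)) := by
    intro s; rw [← vmv_mulVec, hξ0]
  have hgvc : ∀ s, γ 0 * vecMulVec (χ s) (star (χ s)) = -vecMulVec (χ s) (star (χ s)) := by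
    intro s; rw [← vmv_mulVec, hχ0]
    ext i j; simp [vecMulVec]
  have hvxg : ∀ s, vecMulVec (ξ s) (star (ξ s)) * γ 0 = vecMulVec (ξ s) (star (ξ s)) := by
    intro s
    have key : star (ξ s) ᵥ* γ 0 = star (ξ s) := by
      calc star (ξ s) ᵥ* γ 0 = star (ξ s) ᵥ* (γ 0)ᴴ := by rw [hγ0H]
        _ = star (γ 0 *ᵥ ξ s) := (star_mulVec _ _).symm
        _ = star (ξ s) := by rw [hξ0]
    rw [← vmv_vecMul, key]
  have hvcg : ∀ s, vecMulVec (χ s) (star (χ s)) * γ 0 = -vecMulVec (χ s) (star (χ s)) := by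
    intro s
    rw [← vmv_vecMul]
    have : star (χ s) ᵥ* γ 0 = -star (χ s) := by
      calc star (χ s) ᵥ* γ 0 = star (χ s) ᵥ* (γ 0)ᴴ := by rw [hγ0H]
        _ = star (γ 0 *ᵥ χ s) := (star_mulVec _ _).symm
        _ = -star (χ s) := by rw [hχ0]; ext i; simp
    rw [this]
    ext i j; simp [vecMulVec]
  have hS : Sξ + Sχ = 1 := by rw [hSξ, hSχ]; exact hcomp
  have hdiff : Sξ - Sχ = γ 0 := by
    have h1 : γ 0 * (Sξ + Sχ) = γ 0 := by rw [hS, mul_one]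
    rw [hSξ, hSχ] at h1 ⊢
    rw [mul_add, mul_add, mul_add, hgvx, hgvx, hgvc, hgvc] at h1
    rw [← h1]; abel
  have hSξeq : Sξ = (2⁻¹:ℂ) • (1 + γ 0) := by
    have h2S : Sξ + Sξ = 1 + γ 0 := by
      calc Sξ + Sξ = (Sξ + Sχ) + (Sξ - Sχ) := by abel
        _ = 1 + γ 0 := by rw [hS, hdiff]
    have := congrArg (fun X => (2⁻¹:ℂ) • X) h2S
    simpa [← two_smul ℂ Sξ, smul_smul] using this
  have hSχeq : Sχ = (2⁻¹:ℂ) • (1 - γ 0) := by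
    have h2S : Sχ + Sχ = 1 - γ 0 := by
      calc Sχ + Sχ = (Sξ + Sχ) - (Sξ - Sχ) := by abel
        _ = 1 - γ 0 := by rw [hS, hdiff]
    have := congrArg (fun X => (2⁻¹:ℂ) • X) h2S
    simpa [← two_smul ℂ Sχ, smul_smul] using this
  -- normalization
  have hEm : (0:ℝ) < E + m := by
    have : (0:ℝ) ≤ E := Real.sqrt_nonneg _
    linarith
  have hN2 : (Nn:ℂ) * (Nn:ℂ) * ((E:ℂ) + (m:ℂ)) = 1 := by
    have h : (Nn:ℝ) * Nn * (E + m) = 1 := by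
      rw [hNdef, normFactor, div_mul_div_comm, one_mul, ← Real.sqrt_mul_self hEm.le]
      field_simp
      rw [Real.sq_sqrt (Real.sqrt_nonneg _)]
    calc (Nn:ℂ) * (Nn:ℂ) * ((E:ℂ) + (m:ℂ)) = (((Nn * Nn * (E + m) : ℝ)):ℂ) := by push_cast; ring
      _ = 1 := by rw [h]; norm_num
  clear_value E Nn P Q R b U Sξ Sχ
  constructor
  · -- u spin sum
    have hterm : ∀ s : ℤˣ, vecMulVec (uSpinor γ ξ m p s) (star (uSpinor γ ξ m p s) ᵥ* γ 0)
        = ((Nn:ℂ)*(Nn:ℂ)) • (Q * (vecMulVec (ξ s) (star (ξ s)) * (γ 0 * Q))) := by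
      intro s
      have hus : uSpinor γ ξ m p s = (Nn:ℂ) • (Q *ᵥ ξ s) := by
        rw [uSpinor, ← hNdef, ← hPdef, ← hQdef]
      rw [hus, outer_transform, hQH]
    rw [units_sum]
    rw [hterm 1, hterm (-1), ← smul_add]
    have hmid : Q * (vecMulVec (ξ 1) (star (ξ 1)) * (γ 0 * Q))
        + Q * (vecMulVec (ξ (-1)) (star (ξ (-1))) * (γ 0 * Q))
        = Q * (Sξ * (γ 0 * Q)) := by
      rw [hSξ, add_mul, mul_add]
    rw [hmid]
    have hfin : Q * (Sξ * (γ 0 * Q)) = (2⁻¹ * (2*(m:ℂ) + 2*(E:ℂ))) • Q := by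
      have : Sξ * (γ 0 * Q) = Sξ * γ 0 * Q := by rw [mul_assoc]
      rw [this]
      have hSg : Sξ * γ 0 = Sξ := by rw [hSξ, add_mul, hvxg, hvxg]
      rw [hSg, ← mul_assoc, hSξeq]
      simp only [mul_smul_comm, smul_mul_assoc, mul_add, add_mul, mul_one, one_mul]
      rw [hQQ, ← mul_assoc, hQgQ]
      module
    rw [hfin, smul_smul]
    have hone : (Nn:ℂ) * (Nn:ℂ) * (2⁻¹ * (2*(m:ℂ) + 2*(E:ℂ))) = 1 := by
      linear_combination hN2
    rw [hone, one_smul, hQdef]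
  · -- v spin sum
    have hterm : ∀ s : ℤˣ, vecMulVec (vSpinor γ χ m p s) (star (vSpinor γ χ m p s) ᵥ* γ 0)
        = ((Nn:ℂ)*(Nn:ℂ)) • (R * (vecMulVec (χ (-s)) (star (χ (-s))) * (γ 0 * R))) := by
      intro s
      have hvs : vSpinor γ χ m p s = (Nn:ℂ) • (R *ᵥ χ (-s)) := by
        rw [vSpinor, ← hNdef, ← hPdef, ← hRdef]
      rw [hvs, outer_transform, hRH]
    rw [units_sum]
    rw [hterm 1, hterm (-1), ← smul_add]
    have hmid : R * (vecMulVec (χ (-1)) (star (χ (-1))) * (γ 0 * R))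
        + R * (vecMulVec (χ (-(-1))) (star (χ (-(-1)))) * (γ 0 * R))
        = R * (Sχ * (γ 0 * R)) := by
      rw [neg_neg, hSχ, add_mul, mul_add]
      abel
    rw [hmid]
    have hfin : R * (Sχ * (γ 0 * R)) = (-(2⁻¹ * (2*(m:ℂ) + 2*(E:ℂ)))) • R := by
      have : Sχ * (γ 0 * R) = Sχ * γ 0 * R := by rw [mul_assoc]
      rw [this]
      have hSg : Sχ * γ 0 = -Sχ := by
        rw [hSχ, add_mul, hvcg, hvcg]; abel
      rw [hSg, neg_mul, mul_neg, ← mul_assoc, hSχeq]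
      simp only [mul_smul_comm, smul_mul_assoc, mul_sub, sub_mul, mul_one, one_mul]
      rw [hRR, hRgR]
      module
    rw [hfin, smul_smul]
    have hone : (Nn:ℂ) * (Nn:ℂ) * (-(2⁻¹ * (2*(m:ℂ) + 2*(E:ℂ)))) = -1 := by
      linear_combination -hN2
    rw [hone, hRdef]
    ext i j
    simp [Matrix.sub_apply, Matrix.add_apply, Matrix.neg_apply]
    ring
end
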